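/- arXiv:1006.4302 — 3 statements merged into one kernel-verified Lean document; each statement's English description precedes it below -/
import Mathlib

section
/- Let M be a topological space and f : M → M a continuous map. If x ∈ M_F is a nonwandering point of the shift F : M_F → M_F, then every coordinate x_j (j ∈ ℤ) is a nonwandering point of f. In other words, the nonwandering set of F is contained in Ω_f^ℤ ∩ M_F, where Ω_f denotes the nonwandering set of f. -/
/-- The nonwandering set of a self-map `g` of a topological space: the points `x` such
that for every neighborhood `U` of `x` there is `n ≥ 1` with `g^n(U) ∩ U ≠ ∅`. -/
def nonwanderingSet {X : Type*} [TopologicalSpace X] (g : X → X) : Set X :=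
  {x : X | ∀ U : Set X, IsOpen U → x ∈ U → ∃ n : ℕ, 1 ≤ n ∧ (g^[n] '' U ∩ U).Nonempty}

/-- The shift map `F` on the inverse limit `M_F = { x ∈ M^ℤ | f(x_i) = x_{i+1} }`. -/
def shiftMap {M : Type*} (f : M → M)
    (x : {x : ℤ → M // ∀ i : ℤ, f (x i) = x (i + 1)}) :
    {x : ℤ → M // ∀ i : ℤ, f (x i) = x (i + 1)} :=
  ⟨fun i => x.val (i + 1), fun i => x.property (i + 1)⟩

theorem Function.Semiconj.mapsTo_nonwanderingSet {X Y : Type*} [TopologicalSpace X]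
    [TopologicalSpace Y] {π : X → Y} {g : X → X} {f : Y → Y} (h : Function.Semiconj π g f)
    (hπ : Continuous π) : Set.MapsTo π (nonwanderingSet g) (nonwanderingSet f) := by
  intro x hx U hU hxU
  obtain ⟨n, hn, z, ⟨y, hyU, rfl⟩, hzU⟩ := hx (π ⁻¹' U) (hU.preimage hπ) hxU
  exact ⟨n, hn, π (g^[n] y), ⟨π y, hyU, (h.iterate_right n y).symm⟩, hzU⟩

theorem semiconj_coord_shiftMap {M : Type*} (f : M → M) (j : ℤ) :
    Function.Semiconj (fun x : {x : ℤ → M // ∀ i : ℤ, f (x i) = x (i + 1)} => x.val j)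
      (shiftMap f) f :=
  fun x => (x.property j).symm

theorem nonwandering_shift_subset_general
    {M : Type*} [TopologicalSpace M] (f : M → M)
    (x : {x : ℤ → M // ∀ i : ℤ, f (x i) = x (i + 1)})
    (hx : x ∈ nonwanderingSet (shiftMap f)) :
    ∀ j : ℤ, x.val j ∈ nonwanderingSet f :=
  fun j => (semiconj_coord_shiftMap f j).mapsTo_nonwanderingSet
    ((continuous_apply j).comp continuous_subtype_val) hx

/-- If `x ∈ M_F` is a nonwandering point of the shift `F : M_F → M_F`, then every
coordinate `x_j` (`j ∈ ℤ`) is a nonwandering point of `f`; that is, the nonwandering set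
of `F` is contained in `Ω_f^ℤ ∩ M_F`. -/
theorem nonwandering_shift_subset
    {M : Type*} [TopologicalSpace M] (f : M → M) (hf : Continuous f)
    (x : {x : ℤ → M // ∀ i : ℤ, f (x i) = x (i + 1)})
    (hx : x ∈ nonwanderingSet (shiftMap f)) :
    ∀ j : ℤ, x.val j ∈ nonwanderingSet f :=
  nonwandering_shift_subset_general f x hx
end

section
/- Let M be a nonempty compact metric space and f : M → M a continuous map. Then every nonwandering point of f belongs to the global attractor: Ω_f ⊆ M_f = ⋂_{n≥0} f^n(M). -/
open Filter Function Set Topology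

section

variable {X : Type*} {f : X → X} {x : X}

theorem range_iterate_subset_range_iterate {m n : ℕ} (hnm : n ≤ m) :
    range f^[m] ⊆ range f^[n] := by
  rintro _ ⟨y, rfl⟩
  refine ⟨f^[m - n] y, ?_⟩
  rw [← iterate_add_apply, Nat.add_sub_cancel' hnm]

theorem Function.IsPeriodicPt.mem_range_iterate {m : ℕ} (hx : IsPeriodicPt f m x) (hm : 0 < m)
    (n : ℕ) : x ∈ range f^[n] :=
  range_iterate_subset_range_iterate (Nat.le_mul_of_pos_left n hm) ⟨x, (hx.mul_const n).eq⟩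

variable [TopologicalSpace X]

theorem exists_iterate_image_inter_nonempty_of_mem_nonwanderingSet
    (hx : x ∈ nonwanderingSet f) {U : Set X} (hU : U ∈ 𝓝 x) :
    ∃ n, 1 ≤ n ∧ (f^[n] '' U ∩ U).Nonempty := by
  obtain ⟨n, hn, z, hzU, hz⟩ := hx (interior U) isOpen_interior (mem_interior_iff_mem_nhds.2 hU)
  exact ⟨n, hn, z, image_mono interior_subset hzU, interior_subset hz⟩

theorem eventually_smallSets_disjoint_image [T2Space X] {g : X → X} (hg : ContinuousAt g x)
    (hgx : g x ≠ x) : ∀ᶠ V in (𝓝 x).smallSets, Disjoint (g '' V) V := by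
  obtain ⟨A, B, hA, hB, hgxA, hxB, hAB⟩ := t2_separation hgx
  refine eventually_smallSets.2 ⟨g ⁻¹' A ∩ B, inter_mem (hg.preimage_mem_nhds
    (hA.mem_nhds hgxA)) (hB.mem_nhds hxB), fun V hV => ?_⟩
  refine hAB.mono ?_ (hV.trans inter_subset_right)
  exact image_subset_iff.2 (hV.trans inter_subset_left)

theorem exists_isPeriodicPt_of_mem_nonwanderingSet [T2Space X] (hf : Continuous f)
    (hx : x ∈ nonwanderingSet f) {n : ℕ} (hxn : x ∉ closure (range f^[n])) :
    ∃ m, 0 < m ∧ IsPeriodicPt f m x := by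
  by_contra! hper
  have hreturn : ∀ᶠ V in (𝓝 x).smallSets,
      V ⊆ (closure (range f^[n]))ᶜ ∧ ∀ m ∈ Finset.Ico 1 n, Disjoint (f^[m] '' V) V :=
    (eventually_smallSets_subset.2 (isClosed_closure.isOpen_compl.mem_nhds hxn)).and <|
      (eventually_all_finset _).2 fun m hm =>
        eventually_smallSets_disjoint_image (hf.iterate m).continuousAt
          (hper m (Finset.mem_Ico.1 hm).1)
  obtain ⟨V, hV, hVreturn⟩ := eventually_smallSets.1 hreturn
  obtain ⟨hVn, hVm⟩ := hVreturn V subset_rfl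
  obtain ⟨m, hm, _, ⟨z, hz, rfl⟩, hzV⟩ :=
    exists_iterate_image_inter_nonempty_of_mem_nonwanderingSet hx hV
  rcases lt_or_ge m n with hmn | hnm
  · exact (hVm m (Finset.mem_Ico.2 ⟨hm, hmn⟩)).ne_of_mem (mem_image_of_mem _ hz) hzV rfl
  · exact hVn hzV (subset_closure (range_iterate_subset_range_iterate hnm ⟨z, rfl⟩))

theorem nonwanderingSet_subset_closure_range_iterate [T2Space X] (hf : Continuous f) (n : ℕ) :
    nonwanderingSet f ⊆ closure (range f^[n]) := by
  intro x hx
  by_contra hxn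
  obtain ⟨m, hm, hper⟩ := exists_isPeriodicPt_of_mem_nonwanderingSet hf hx hxn
  exact hxn (subset_closure (hper.mem_range_iterate hm n))

end

theorem nonwandering_subset_global_attractor_general
    {M : Type*} [MetricSpace M] [CompactSpace M]
    (f : M → M) (hf : Continuous f) :
    nonwanderingSet f ⊆ ⋂ n : ℕ, f^[n] '' Set.univ := by
  refine subset_iInter fun n => ?_
  rw [image_univ, ← (isCompact_range (hf.iterate n)).isClosed.closure_eq]
  exact nonwanderingSet_subset_closure_range_iterate hf n

/-- For a continuous self-map `f` of a nonempty compact metric space `M`, every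
nonwandering point belongs to the global attractor: `Ω_f ⊆ M_f = ⋂_{n ≥ 0} f^n(M)`. -/
theorem nonwandering_subset_global_attractor
    {M : Type*} [MetricSpace M] [CompactSpace M] [Nonempty M]
    (f : M → M) (hf : Continuous f) :
    nonwanderingSet f ⊆ ⋂ n : ℕ, f^[n] '' Set.univ :=
  nonwandering_subset_global_attractor_general f hf
end

section
/- Let M be a topological space and f : M → M a continuous map. If the periodic points of f are dense in the nonwandering set Ω_f, then the periodic points of the shift F are dense in Ω_F := Ω_f^ℤ ∩ M_F. -/
open Function Filter Topology Set

abbrev InverseLimit {M : Type*} (f : M → M) : Type _ :=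
  {x : ℤ → M // ∀ i : ℤ, f (x i) = x (i + 1)}

section

variable {M : Type*} {f : M → M}

namespace InverseLimit

theorem apply_add_natCast (x : InverseLimit f) (i : ℤ) (m : ℕ) :
    x.val (i + m) = f^[m] (x.val i) := by
  induction m with
  | zero => simp
  | succ m ih =>
    rw [Nat.cast_succ, ← add_assoc, ← x.property, ih, iterate_succ_apply']

theorem shiftMap_iterate_apply (x : InverseLimit f) (m : ℕ) (i : ℤ) :
    ((shiftMap f)^[m] x).val i = x.val (i + m) := by
  induction m generalizing x with
  | zero => simp
  | succ m ih =>
    rw [iterate_succ_apply, ih, Nat.cast_succ, ← add_assoc]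
    rfl

theorem exists_mem_nhds_coord_subset [TopologicalSpace M] (hf : Continuous f)
    (x : InverseLimit f) {t : Set (InverseLimit f)} (ht : t ∈ 𝓝 x) :
    ∃ n : ℤ, ∃ V ∈ 𝓝 (x.val n), {y : InverseLimit f | y.val n ∈ V} ⊆ t := by
  obtain ⟨u, hu, hut⟩ := (mem_nhds_induced Subtype.val x t).mp ht
  rw [nhds_pi, Filter.mem_pi] at hu
  obtain ⟨I, hI, U, hU, hIU⟩ := hu
  obtain ⟨n, hn⟩ := hI.bddBelow
  have hcoord : ∀ y : InverseLimit f, ∀ i ∈ I, y.val i = f^[(i - n).toNat] (y.val n) := by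
    intro y i hi
    rw [← apply_add_natCast, Int.toNat_of_nonneg (sub_nonneg.2 (hn hi)), add_sub_cancel]
  refine ⟨n, ⋂ i ∈ I, f^[(i - n).toNat] ⁻¹' U i, (biInter_mem hI).2 fun i hi => ?_,
    fun y hy => hut (hIU fun i hi => ?_)⟩
  · exact (hf.iterate _).continuousAt.preimage_mem_nhds (hcoord x i hi ▸ hU i)
  · rw [hcoord y i hi]
    exact mem_iInter₂.1 hy i hi

end InverseLimit

def periodicOrbitSeq (f : M → M) (k : ℕ) (p : M) (i : ℤ) : M :=
  f^[(i % k).toNat] p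

variable {k : ℕ} {p : M}

theorem periodicOrbitSeq_natCast (hp : IsPeriodicPt f k p) (m : ℕ) :
    periodicOrbitSeq f k p m = f^[m] p := by
  rw [periodicOrbitSeq, ← Int.natCast_mod, Int.toNat_natCast, hp.iterate_mod_apply]

theorem periodicOrbitSeq_add_one (hp : IsPeriodicPt f k p) (hk : 0 < k) (i : ℤ) :
    f (periodicOrbitSeq f k p i) = periodicOrbitSeq f k p (i + 1) := by
  have hr : i % k = ((i % k).toNat : ℤ) :=
    (Int.toNat_of_nonneg (Int.emod_nonneg _ (by omega))).symm
  have hmod : periodicOrbitSeq f k p (i + 1) = periodicOrbitSeq f k p (i % k + 1) := by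
    rw [periodicOrbitSeq, periodicOrbitSeq, Int.emod_add_emod]
  rw [hmod, hr, ← Nat.cast_succ, periodicOrbitSeq_natCast hp, iterate_succ_apply',
    periodicOrbitSeq]

theorem periodicOrbitSeq_periodic (f : M → M) (k : ℕ) (p : M) :
    Periodic (periodicOrbitSeq f k p) k := by
  intro i
  rw [periodicOrbitSeq, periodicOrbitSeq, Int.add_emod_right]

def periodicOrbitPoint (hp : IsPeriodicPt f k p) (hk : 0 < k) (n : ℤ) : InverseLimit f :=
  ⟨fun i => periodicOrbitSeq f k p (i - n), fun i => by
    rw [periodicOrbitSeq_add_one hp hk, sub_add_eq_add_sub]⟩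

theorem periodicOrbitPoint_apply_self (hp : IsPeriodicPt f k p) (hk : 0 < k) (n : ℤ) :
    (periodicOrbitPoint hp hk n).val n = p := by
  simp [periodicOrbitPoint, periodicOrbitSeq]

theorem isPeriodicPt_shiftMap_periodicOrbitPoint (hp : IsPeriodicPt f k p) (hk : 0 < k)
    (n : ℤ) : IsPeriodicPt (shiftMap f) k (periodicOrbitPoint hp hk n) := by
  refine Subtype.ext (funext fun i => ?_)
  rw [InverseLimit.shiftMap_iterate_apply]
  show periodicOrbitSeq f k p (i + k - n) = periodicOrbitSeq f k p (i - n)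
  rw [add_sub_right_comm]
  exact periodicOrbitSeq_periodic f k p (i - n)

end

/-- If the periodic points of `f` are dense in the nonwandering set `Ω_f`, then the
periodic points of the shift `F` are dense in `Ω_F = Ω_f^ℤ ∩ M_F`. -/
theorem periodicPts_dense_in_nonwandering_inverse_limit
    {M : Type*} [TopologicalSpace M] (f : M → M) (hf : Continuous f)
    (hdense : nonwanderingSet f ⊆ closure (Function.periodicPts f)) :
    {x : {x : ℤ → M // ∀ i : ℤ, f (x i) = x (i + 1)} | ∀ j : ℤ, x.val j ∈ nonwanderingSet f}
      ⊆ closure (Function.periodicPts (shiftMap f)) := by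
  refine fun x hx => mem_closure_iff_nhds.2 fun t ht => ?_
  obtain ⟨n, V, hV, hVt⟩ := InverseLimit.exists_mem_nhds_coord_subset hf x ht
  obtain ⟨p, hpV, k, hk, hp⟩ := mem_closure_iff_nhds.1 (hdense (hx n)) V hV
  refine ⟨periodicOrbitPoint hp hk n, hVt ?_, k, hk,
    isPeriodicPt_shiftMap_periodicOrbitPoint hp hk n⟩
  simpa [periodicOrbitPoint_apply_self] using hpV
end
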